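/- arXiv:1805.08885 — 3 statements merged into one kernel-verified Lean document; each statement's English description precedes it below -/
import Mathlib

section
/- Let n ≥ 1, fix λ, μ ∈ ℂ^n and indices 1 ≤ i, j ≤ n. If λ ∼ μ and λ̌_i = μ̌_j, then λ + ε_i ∼ μ + ε_j. -/
/-
Shared setup: weights for pe(n) are vectors in ℂⁿ (`Fin n → ℂ`), with 0-based indices
(the 1-based index i corresponds to the 0-based index i−1; since the dot action and the
shift λ̌ only involve differences of indices, the translation is verbatim).
`ε_k` is `Pi.single k 1`. The dot action is (w·λ)_i = λ_{w⁻¹ i} + i − w⁻¹ i; the integral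
Weyl group condition is that w·λ − λ has integer coordinates; `Sim` is the equivalence
closure (`Relation.EqvGen`) of the moves λ ↦ λ ± 2ε_k and λ ↦ w·λ for w ∈ W^λ.
-/

namespace PeBlocks

/-- The dot action of S_n on ℂⁿ : (w·λ)_i = λ_{w⁻¹ i} + i − w⁻¹ i. -/
noncomputable def dot {n : ℕ} (w : Equiv.Perm (Fin n)) (l : Fin n → ℂ) : Fin n → ℂ :=
  fun i => l (w⁻¹ i) + ((i : ℕ) : ℂ) - (((w⁻¹ i : Fin n) : ℕ) : ℂ)

/-- `w` lies in the integral Weyl group W^λ : w·λ − λ ∈ ℤⁿ. -/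
def InIntegralWeyl {n : ℕ} (w : Equiv.Perm (Fin n)) (l : Fin n → ℂ) : Prop :=
  ∀ i : Fin n, ∃ z : ℤ, dot w l i - l i = (z : ℂ)

/-- Generating moves of the equivalence relation ∼ : λ ∼ λ ± 2ε_k and λ ∼ w·λ for
w ∈ W^λ. -/
def Step {n : ℕ} (l m : Fin n → ℂ) : Prop :=
  (∃ k : Fin n, m = l + (2 : ℂ) • (Pi.single k 1 : Fin n → ℂ) ∨ m = l - (2 : ℂ) • (Pi.single k 1 : Fin n → ℂ)) ∨
  (∃ w : Equiv.Perm (Fin n), InIntegralWeyl w l ∧ m = dot w l)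

/-- The equivalence relation ∼ on ℂⁿ : the smallest equivalence relation containing the
generating moves. -/
def Sim {n : ℕ} : (Fin n → ℂ) → (Fin n → ℂ) → Prop := Relation.EqvGen Step

/-
Follow the extra ε along a chain of generating moves from λ to μ. A move λ ↦ λ ± 2ε_k is also a
move λ + ε_i ↦ (λ ± 2ε_k) + ε_i, and a Weyl move λ ↦ w·λ gives λ + ε_i ↦ w·λ + ε_{w i}, because
w·(λ + ε_i) = w·λ + ε_{w i} and w stays integral for λ + ε_i. Since (w·λ)ˇ_{w i} = λ̌_i, the
shifted coordinate carrying the extra ε is preserved modulo 2 by every move, so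
λ + ε_i ∼ μ + ε_{j'} for some j' with μ̌_{j'} ≡ λ̌_i = μ̌_j (mod 2). Inside μ the ε then moves
from j' to j: shifting μ_{j'} by an even integer makes μ̌_{j'} = μ̌_j, and then the
transposition (j' j) fixes the weight and is integral.
-/

open Relation AddCommGroup

section

variable {n : ℕ}

/-- The shifted weight `λ̌ = λ + ρ̂`, in 0-based indices. -/
def check (l : Fin n → ℂ) (i : Fin n) : ℂ := l i - ((i : ℕ) : ℂ)

lemma dot_apply_eq_check (w : Equiv.Perm (Fin n)) (l : Fin n → ℂ) (a : Fin n) :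
    dot w l a = check l (w⁻¹ a) + ((a : ℕ) : ℂ) := by
  unfold dot check
  ring

lemma check_dot (w : Equiv.Perm (Fin n)) (l : Fin n → ℂ) (a : Fin n) :
    check (dot w l) a = check l (w⁻¹ a) := by
  rw [check, dot_apply_eq_check, add_sub_cancel_right]

lemma dot_inv_dot (w : Equiv.Perm (Fin n)) (l : Fin n → ℂ) : dot w⁻¹ (dot w l) = l := by
  funext a
  rw [dot_apply_eq_check, check_dot, inv_inv, Equiv.Perm.inv_def, Equiv.symm_apply_apply, check,
    sub_add_cancel]

lemma dot_add_single (w : Equiv.Perm (Fin n)) (l : Fin n → ℂ) (j : Fin n) :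
    dot w (l + Pi.single (w⁻¹ j) 1) = dot w l + Pi.single j 1 := by
  funext a
  simp only [dot, Pi.add_apply, Pi.single_apply, w⁻¹.injective.eq_iff]
  ring

lemma dot_swap_eq_self {l : Fin n → ℂ} {i j : Fin n} (h : check l i = check l j) :
    dot (Equiv.swap i j) l = l := by
  funext a
  rw [dot_apply_eq_check, Equiv.swap_inv, Equiv.swap_apply_def]
  split_ifs with hi hj
  · rw [hi, ← h, check, sub_add_cancel]
  · rw [hj, h, check, sub_add_cancel]
  · rw [check, sub_add_cancel]

lemma exists_single_apply_eq_intCast (c a : Fin n) :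
    ∃ z : ℤ, (Pi.single c 1 : Fin n → ℂ) a = z := by
  rw [Pi.single_apply]
  split_ifs
  exacts [⟨1, Int.cast_one.symm⟩, ⟨0, Int.cast_zero.symm⟩]

lemma InIntegralWeyl.inv {w : Equiv.Perm (Fin n)} {l : Fin n → ℂ} (hw : InIntegralWeyl w l) :
    InIntegralWeyl w⁻¹ (dot w l) := fun a =>
  let ⟨z, hz⟩ := hw a
  ⟨-z, by rw [dot_inv_dot, Int.cast_neg, ← hz, neg_sub]⟩

lemma InIntegralWeyl.add_single {w : Equiv.Perm (Fin n)} {l : Fin n → ℂ}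
    (hw : InIntegralWeyl w l) (c : Fin n) : InIntegralWeyl w (l + Pi.single c 1) := by
  intro a
  obtain ⟨z, hz⟩ := hw a
  obtain ⟨x, hx⟩ := exists_single_apply_eq_intCast c (w⁻¹ a)
  obtain ⟨y, hy⟩ := exists_single_apply_eq_intCast c a
  refine ⟨z + x - y, ?_⟩
  simp only [dot, Pi.add_apply] at hz ⊢
  push_cast
  linear_combination hz + hx - hy

lemma Step.symm {l m : Fin n → ℂ} (h : Step l m) : Step m l := by
  rcases h with ⟨k, rfl | rfl⟩ | ⟨w, hw, rfl⟩
  · exact Or.inl ⟨k, Or.inr (add_sub_cancel_right _ _).symm⟩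
  · exact Or.inl ⟨k, Or.inl (sub_add_cancel _ _).symm⟩
  · exact Or.inr ⟨w⁻¹, hw.inv, (dot_inv_dot w l).symm⟩

instance : Std.Symm (Step (n := n)) := ⟨fun _ _ => Step.symm⟩

lemma Sim.refl (l : Fin n → ℂ) : Sim l l :=
  EqvGen.refl l

lemma Sim.symm {l m : Fin n → ℂ} (h : Sim l m) : Sim m l :=
  EqvGen.symm l m h

lemma Sim.trans {a b c : Fin n → ℂ} (hab : Sim a b) (hbc : Sim b c) : Sim a c :=
  EqvGen.trans a b c hab hbc

lemma sim_dot {w : Equiv.Perm (Fin n)} {l : Fin n → ℂ} (hw : InIntegralWeyl w l) :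
    Sim l (dot w l) :=
  EqvGen.rel _ _ (Or.inr ⟨w, hw, rfl⟩)

lemma sim_add_single_dot {w : Equiv.Perm (Fin n)} {l : Fin n → ℂ} (hw : InIntegralWeyl w l)
    (j : Fin n) : Sim (l + Pi.single (w⁻¹ j) 1) (dot w l + Pi.single j 1) :=
  dot_add_single w l j ▸ sim_dot (hw.add_single _)

lemma sim_add_zsmul_two_smul_single (l : Fin n → ℂ) (k : Fin n) (t : ℤ) :
    Sim l (l + (t • 2 : ℂ) • Pi.single k 1) := by
  induction t using Int.induction_on with
  | zero => simpa using Sim.refl l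
  | succ s ih =>
    refine ih.trans (EqvGen.rel _ _ (Or.inl ⟨k, Or.inl ?_⟩))
    simp only [add_smul, one_zsmul, add_assoc]
  | pred s ih =>
    refine ih.trans (EqvGen.rel _ _ (Or.inl ⟨k, Or.inr ?_⟩))
    simp only [sub_smul, one_zsmul, add_sub_assoc]

lemma sim_add_single_swap {l : Fin n → ℂ} {i j : Fin n} (h : check l i = check l j) :
    Sim (l + Pi.single i 1) (l + Pi.single j 1) := by
  have hw : InIntegralWeyl (Equiv.swap i j) l :=
    fun a => ⟨0, by rw [dot_swap_eq_self h, sub_self, Int.cast_zero]⟩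
  simpa [dot_swap_eq_self h] using sim_add_single_dot hw j

lemma sim_add_single_of_modEq {l : Fin n → ℂ} {i j : Fin n}
    (h : check l i ≡ check l j [PMOD 2]) : Sim (l + Pi.single i 1) (l + Pi.single j 1) := by
  rcases eq_or_ne i j with rfl | hij
  · exact Sim.refl _
  obtain ⟨t, ht⟩ := modEq_iff_eq_add_zsmul.mp h
  set l' := l + (t • 2 : ℂ) • Pi.single i 1
  have hl' : Sim (l + Pi.single i 1) (l' + Pi.single i 1) := by
    simpa [l', add_right_comm] using sim_add_zsmul_two_smul_single (l + Pi.single i 1) i t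
  have hl'' : Sim (l + Pi.single j 1) (l' + Pi.single j 1) := by
    simpa [l', add_right_comm] using sim_add_zsmul_two_smul_single (l + Pi.single j 1) i t
  have hcheck : check l' i = check l' j := by
    simp only [l', check, Pi.add_apply, Pi.smul_apply, Pi.single_eq_same,
      Pi.single_eq_of_ne hij.symm, zsmul_eq_mul, smul_eq_mul, mul_one, mul_zero, add_zero] at ht ⊢
    linear_combination -ht
  exact hl'.trans ((sim_add_single_swap hcheck).trans hl''.symm)

lemma Step.exists_modEq_sim {l m : Fin n → ℂ} (h : Step l m) (i : Fin n) :
    ∃ j, check l i ≡ check m j [PMOD 2] ∧ Sim (l + Pi.single i 1) (m + Pi.single j 1) := by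
  rcases h with ⟨k, rfl | rfl⟩ | ⟨w, hw, rfl⟩
  · refine ⟨i, ?_, EqvGen.rel _ _ (Or.inl ⟨k, Or.inl (add_right_comm _ _ _)⟩)⟩
    obtain ⟨z, hz⟩ := exists_single_apply_eq_intCast k i
    refine modEq_iff_eq_add_zsmul.mpr ⟨z, ?_⟩
    simp only [check, Pi.add_apply, Pi.smul_apply, hz, smul_eq_mul, zsmul_eq_mul]
    ring
  · refine ⟨i, ?_, EqvGen.rel _ _ (Or.inl ⟨k, Or.inr (sub_add_eq_add_sub _ _ _)⟩)⟩
    obtain ⟨z, hz⟩ := exists_single_apply_eq_intCast k i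
    refine modEq_iff_eq_add_zsmul.mpr ⟨-z, ?_⟩
    simp only [check, Pi.sub_apply, Pi.smul_apply, hz, smul_eq_mul, zsmul_eq_mul, Int.cast_neg]
    ring
  · refine ⟨w i, by rw [check_dot, Equiv.Perm.inv_def, Equiv.symm_apply_apply], ?_⟩
    simpa using sim_add_single_dot hw (w i)

lemma Sim.exists_modEq_sim {l m : Fin n → ℂ} (h : Sim l m) (i : Fin n) :
    ∃ j, check l i ≡ check m j [PMOD 2] ∧ Sim (l + Pi.single i 1) (m + Pi.single j 1) := by
  rw [Sim, EqvGen.eqvGen_eq_reflTransGen] at h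
  induction h with
  | refl => exact ⟨i, modEq_rfl, Sim.refl _⟩
  | tail _ hstep ih =>
    obtain ⟨j, hj, hsim⟩ := ih
    obtain ⟨k, hk, hsim'⟩ := hstep.exists_modEq_sim j
    exact ⟨k, hj.trans hk, hsim.trans hsim'⟩

end

theorem stmt5_general (n : ℕ) (l m : Fin n → ℂ) (i j : Fin n)
    (hsim : Sim l m)
    (hcheck : l i - ((i : ℕ) : ℂ) = m j - ((j : ℕ) : ℂ)) :
    Sim (l + (Pi.single i 1 : Fin n → ℂ)) (m + (Pi.single j 1 : Fin n → ℂ)) := by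
  obtain ⟨j', hj', hsim'⟩ := hsim.exists_modEq_sim i
  have hparity : check m j' ≡ check m j [PMOD 2] := by
    have hcheck' : check l i = check m j := hcheck
    exact hcheck' ▸ hj'.symm
  exact hsim'.trans (sim_add_single_of_modEq hparity)

theorem stmt5 (n : ℕ) (hn : 1 ≤ n) (l m : Fin n → ℂ) (i j : Fin n)
    (hsim : Sim l m)
    (hcheck : l i - ((i : ℕ) : ℂ) = m j - ((j : ℕ) : ℂ)) :
    Sim (l + (Pi.single i 1 : Fin n → ℂ)) (m + (Pi.single j 1 : Fin n → ℂ)) :=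
  stmt5_general n l m i j hsim hcheck

end PeBlocks
end

section
/- Let n ≥ 1 and for 0 ≤ i ≤ n define ∂^i := i ε_1 + (i−1) ε_2 + ⋯ + 1·ε_i (i.e. ∂^i_j = i+1−j for j ≤ i and ∂^i_j = 0 for j > i). Then for every λ ∈ ℤ^n there exists exactly one index i ∈ {0, 1, …, n} such that λ ∼ ∂^i; in particular, the vectors ∂^0, ∂^1, …, ∂^n are pairwise inequivalent under ∼ and every integer weight is equivalent to one of them. -/
/-!
The number of coordinates of `λ + ρ̂` that are odd integers is a `∼`-invariant: the moves
`λ ↦ λ ± 2ε_k` do not change parities, and the dot action merely permutes the coordinates of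
`λ + ρ̂`. On integral weights it is a complete invariant. Every permutation is integral for an
integral weight, so a permutation moves the odd coordinates of `λ + ρ̂` to those of `μ + ρ̂`,
after which `λ` and `μ` differ by an even integral vector. Finally, `∂^i + ρ̂` has
`(i if i is odd, else 0) + (⌊n/2⌋ - ⌊i/2⌋)` odd coordinates, and as a function of `i`
this is a bijection of `{0, …, n}`.
-/

/-
Shared setup: weights for pe(n) are vectors in ℂⁿ (`Fin n → ℂ`), with 0-based indices
(the 1-based index i corresponds to the 0-based index i−1; since the dot action and the
shift λ̌ only involve differences of indices, the translation is verbatim).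
`ε_k` is `Pi.single k 1`. The dot action is (w·λ)_i = λ_{w⁻¹ i} + i − w⁻¹ i; the integral
Weyl group condition is that w·λ − λ has integer coordinates; `Sim` is the equivalence
closure (`Relation.EqvGen`) of the moves λ ↦ λ ± 2ε_k and λ ↦ w·λ for w ∈ W^λ.
-/

namespace PeBlocks

/-- ∂^i (0-based coordinates): ∂^i_j = i − j for j < i, 0 otherwise. -/
noncomputable def pd (n i : ℕ) : Fin n → ℂ :=
  fun j => if (j : ℕ) < i then ((i - (j : ℕ) : ℕ) : ℂ) else 0

def IsOddInt (z : ℂ) : Prop := ∃ k : ℤ, Odd k ∧ (k : ℂ) = z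

lemma isOddInt_intCast (k : ℤ) : IsOddInt k ↔ Odd k :=
  ⟨fun ⟨_, hm, h⟩ => Int.cast_injective h ▸ hm, fun hk => ⟨k, hk, rfl⟩⟩

lemma isOddInt_add_intCast {z : ℂ} {m : ℤ} (hm : Even m) : IsOddInt (z + m) ↔ IsOddInt z := by
  constructor
  · rintro ⟨k, hk, h⟩
    exact ⟨k - m, hk.sub_even hm, by push_cast; rw [h]; ring⟩
  · rintro ⟨k, hk, rfl⟩
    exact ⟨k + m, hk.add_even hm, by push_cast; ring⟩

lemma exists_perm_iff_of_natCard_eq {α : Type*} [Finite α] {p q : α → Prop}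
    (h : Nat.card {x // p x} = Nat.card {x // q x}) : ∃ σ : Equiv.Perm α, ∀ x, q (σ x) ↔ p x := by
  classical
  obtain ⟨e⟩ := Finite.card_eq.1 h
  exact ⟨e.extendSubtype, fun x => ⟨fun hq => by_contra fun hp => e.extendSubtype_not_mem x hp hq,
    e.extendSubtype_mem x⟩⟩

lemma natCard_fin_subtype_eq_count {n : ℕ} (P : ℕ → Prop) [DecidablePred P] :
    Nat.card {j : Fin n // P j} = Nat.count P n := by
  rw [Nat.count_eq_card_filter_range, ← Nat.card_eq_finsetCard]
  exact Nat.card_congr ((Fin.equivSubtype.subtypeEquiv fun _ => Iff.rfl).trans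
    ((Equiv.subtypeSubtypeEquivSubtypeInter _ _).trans (Equiv.subtypeEquivRight (by simp))))

lemma count_odd_eq_div_two (m : ℕ) : Nat.count (· % 2 = 1) m = m / 2 := by
  induction m with
  | zero => rfl
  | succ m ih => rw [Nat.count_succ, ih]; split_ifs <;> omega

-- Counts the odd integer coordinates of λ + ρ̂, where ρ̂_j = -j in 0-based indexing.
noncomputable def oddCount {n : ℕ} (l : Fin n → ℂ) : ℕ := Nat.card {j : Fin n // IsOddInt (l j - j)}

lemma oddCount_intCast {n : ℕ} (a : Fin n → ℤ) :
    oddCount (fun j => (a j : ℂ)) = Nat.card {j : Fin n // Odd (a j - j)} := by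
  simp only [oddCount, ← isOddInt_intCast]
  push_cast
  rfl

lemma oddCount_le {n : ℕ} (l : Fin n → ℂ) : oddCount l ≤ n :=
  (Finite.card_subtype_le _).trans (Nat.card_fin n).le

lemma dot_apply_sub {n : ℕ} (w : Equiv.Perm (Fin n)) (l : Fin n → ℂ) (i : Fin n) :
    dot w l i - i = l (w⁻¹ i) - (w⁻¹ i : Fin n) := by
  unfold dot
  ring

lemma oddCount_dot {n : ℕ} (w : Equiv.Perm (Fin n)) (l : Fin n → ℂ) :
    oddCount (dot w l) = oddCount l :=
  Nat.card_congr (w⁻¹.subtypeEquiv fun i => by rw [dot_apply_sub])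

lemma oddCount_add_two_smul_single {n : ℕ} (l : Fin n → ℂ) (k : Fin n) (z : ℤ) :
    oddCount (l + (2 * z : ℂ) • Pi.single k 1) = oddCount l := by
  unfold oddCount
  congr! 3 with j
  rw [Pi.add_apply, add_sub_right_comm]
  convert isOddInt_add_intCast (z := l j - j) (even_two_mul (z * if j = k then 1 else 0)) using 2
  simp [Pi.single_apply]

lemma Step.oddCount_eq {n : ℕ} {l m : Fin n → ℂ} (h : Step l m) : oddCount l = oddCount m := by
  rcases h with ⟨k, rfl | rfl⟩ | ⟨w, -, rfl⟩
  · simpa using (oddCount_add_two_smul_single l k 1).symm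
  · simpa [sub_eq_add_neg] using (oddCount_add_two_smul_single l k (-1)).symm
  · exact (oddCount_dot w l).symm

lemma Sim.oddCount_eq {n : ℕ} {l m : Fin n → ℂ} (h : Sim l m) : oddCount l = oddCount m := by
  induction h with
  | rel _ _ h => exact h.oddCount_eq
  | refl => rfl
  | symm _ _ _ ih => exact ih.symm
  | trans _ _ _ _ _ ih₁ ih₂ => exact ih₁.trans ih₂

lemma sim_equivalence {n : ℕ} : Equivalence (@Sim n) :=
  Relation.EqvGen.is_equivalence _

lemma sim_add_single {n : ℕ} (l : Fin n → ℂ) (k : Fin n) (z : ℤ) :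
    Sim l (l + Pi.single k (2 * z : ℂ)) := by
  induction z using Int.induction_on with
  | zero => simpa using sim_equivalence.refl l
  | succ i ih =>
    refine sim_equivalence.trans ih (Relation.EqvGen.rel _ _ (Or.inl ⟨k, Or.inl ?_⟩))
    ext j
    simp only [Pi.add_apply, Pi.smul_apply, Pi.single_apply, smul_eq_mul]
    split_ifs <;> push_cast <;> ring
  | pred i ih =>
    refine sim_equivalence.trans ih (Relation.EqvGen.rel _ _ (Or.inl ⟨k, Or.inr ?_⟩))
    ext j
    simp only [Pi.add_apply, Pi.sub_apply, Pi.smul_apply, Pi.single_apply, smul_eq_mul]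
    split_ifs <;> push_cast <;> ring

lemma sim_add_sum_single {n : ℕ} (l : Fin n → ℂ) (z : Fin n → ℤ) (s : Finset (Fin n)) :
    Sim l (l + ∑ k ∈ s, Pi.single k (2 * z k : ℂ)) := by
  classical
  induction s using Finset.induction_on with
  | empty => simpa using sim_equivalence.refl l
  | insert k s hk ih =>
    rw [Finset.sum_insert hk, add_comm (Pi.single _ _), ← add_assoc]
    exact sim_equivalence.trans ih (sim_add_single _ k (z k))

lemma sim_intCast_of_even_sub {n : ℕ} {a b : Fin n → ℤ} (h : ∀ j, Even (b j - a j)) :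
    Sim (fun j => (a j : ℂ)) (fun j => (b j : ℂ)) := by
  choose z hz using h
  convert sim_add_sum_single (fun j => (a j : ℂ)) z Finset.univ
  rw [Finset.univ_sum_single, Pi.add_apply, ← Int.cast_ofNat, ← Int.cast_mul, two_mul, ← hz,
    Int.cast_sub]
  ring

lemma sim_dot_intCast {n : ℕ} (a : Fin n → ℤ) (w : Equiv.Perm (Fin n)) :
    Sim (fun j => (a j : ℂ)) (dot w fun j => (a j : ℂ)) :=
  Relation.EqvGen.rel _ _ <| Or.inr ⟨w, fun i => ⟨a (w⁻¹ i) + i - (w⁻¹ i : Fin n) - a i,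
    by unfold dot; push_cast; ring⟩, rfl⟩

lemma dot_intCast {n : ℕ} (w : Equiv.Perm (Fin n)) (a : Fin n → ℤ) :
    dot w (fun j => (a j : ℂ)) = fun i => ((a (w⁻¹ i) + i - (w⁻¹ i : Fin n) : ℤ) : ℂ) := by
  ext i
  simp [dot]

lemma sim_intCast_of_oddCount_eq {n : ℕ} {a b : Fin n → ℤ}
    (h : oddCount (fun j => (a j : ℂ)) = oddCount (fun j => (b j : ℂ))) :
    Sim (fun j => (a j : ℂ)) (fun j => (b j : ℂ)) := by
  rw [oddCount_intCast, oddCount_intCast] at h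
  obtain ⟨w, hw⟩ := exists_perm_iff_of_natCard_eq h
  refine sim_equivalence.trans (sim_dot_intCast a w) ?_
  rw [dot_intCast]
  refine sim_intCast_of_even_sub fun i => ?_
  have hi : Odd (b i - i) ↔ Odd (a (w⁻¹ i) - (w⁻¹ i : Fin n)) := by
    simpa using hw (w⁻¹ i)
  rw [show b i - (a (w⁻¹ i) + i - (w⁻¹ i : Fin n)) = (b i - i) - (a (w⁻¹ i) - (w⁻¹ i : Fin n)) by
    ring, Int.even_sub, ← Int.not_odd_iff_even, ← Int.not_odd_iff_even, hi]

lemma sim_intCast_iff {n : ℕ} (a b : Fin n → ℤ) :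
    Sim (fun j => (a j : ℂ)) (fun j => (b j : ℂ)) ↔
      oddCount (fun j => (a j : ℂ)) = oddCount (fun j => (b j : ℂ)) :=
  ⟨Sim.oddCount_eq, sim_intCast_of_oddCount_eq⟩

-- `oddCount (pd n i)`: the first `i` coordinates of `∂^i + ρ̂` are `i - 2j`, all of the parity of
-- `i`, and the remaining ones are `-j` for `i ≤ j < n`.
def pdOddCount (n i : ℕ) : ℕ := (if i % 2 = 1 then i else 0) + (n / 2 - i / 2)

lemma count_pd_parity {n i : ℕ} (h : i ≤ n) :
    Nat.count (fun k => if k < i then i % 2 = 1 else k % 2 = 1) n = pdOddCount n i := by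
  obtain ⟨m, rfl⟩ := Nat.exists_eq_add_of_le h
  have hlow : Nat.count (fun k => if k < i then i % 2 = 1 else k % 2 = 1) i =
      if i % 2 = 1 then i else 0 := by
    split_ifs with hi
    · exact Nat.count_of_forall fun k hk => by simp [hk, hi]
    · exact Nat.count_of_forall_not fun k hk => by simp [hk, hi]
  have hodd := Nat.count_add (· % 2 = 1) i m
  rw [count_odd_eq_div_two, count_odd_eq_div_two] at hodd
  simp only [Nat.count_add, hlow, pdOddCount, add_lt_iff_neg_left, Nat.not_lt_zero, if_false]
  omega

lemma pd_eq_intCast (n i : ℕ) :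
    pd n i = fun j : Fin n => ((if (j : ℕ) < i then (i : ℤ) - j else 0 : ℤ) : ℂ) := by
  ext j
  unfold pd
  split_ifs with hj
  · push_cast [hj.le]
    rfl
  · simp

lemma oddCount_pd {n i : ℕ} (h : i ≤ n) : oddCount (pd n i) = pdOddCount n i := by
  rw [pd_eq_intCast, oddCount_intCast, ← count_pd_parity h, ← natCard_fin_subtype_eq_count]
  refine Nat.card_congr (Equiv.subtypeEquivRight fun j => ?_)
  split_ifs <;> simp only [Int.odd_iff] <;> omega

lemma existsUnique_pdOddCount_eq {n c : ℕ} (hc : c ≤ n) : ∃! i, i ≤ n ∧ pdOddCount n i = c := by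
  -- even `i` take the values `n / 2 - i / 2 ≤ n / 2`, odd `i` the values `i + n / 2 - i / 2 > n / 2`
  obtain ⟨i, hi, hic⟩ : ∃ i, i ≤ n ∧ pdOddCount n i = c := by
    by_cases h : c ≤ n / 2
    · exact ⟨2 * (n / 2 - c), by omega, by simp only [pdOddCount]; split_ifs <;> omega⟩
    · exact ⟨2 * (c - n / 2) - 1, by omega, by simp only [pdOddCount]; split_ifs <;> omega⟩
  refine ⟨i, ⟨hi, hic⟩, fun y ⟨hy, hyc⟩ => ?_⟩
  simp only [pdOddCount] at hic hyc
  split_ifs at hic hyc <;> omega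

theorem stmt8_general (n : ℕ) (l : Fin n → ℂ)
    (hl : ∀ j : Fin n, ∃ z : ℤ, l j = (z : ℂ)) :
    ∃! i : ℕ, i ≤ n ∧ Sim l (pd n i) := by
  choose a ha using hl
  obtain rfl : l = fun j => (a j : ℂ) := funext ha
  have hsim : ∀ i ≤ n,
      Sim (fun j => (a j : ℂ)) (pd n i) ↔ pdOddCount n i = oddCount fun j => (a j : ℂ) := by
    intro i hi
    rw [← oddCount_pd hi, pd_eq_intCast, sim_intCast_iff, eq_comm]
  obtain ⟨i, ⟨hi, hic⟩, huniq⟩ := existsUnique_pdOddCount_eq (oddCount_le fun j => (a j : ℂ))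
  exact ⟨i, ⟨hi, (hsim i hi).2 hic⟩, fun y ⟨hy, hyc⟩ => huniq y ⟨hy, (hsim y hy).1 hyc⟩⟩

theorem stmt8 (n : ℕ) (hn : 1 ≤ n) (l : Fin n → ℂ)
    (hl : ∀ j : Fin n, ∃ z : ℤ, l j = (z : ℂ)) :
    ∃! i : ℕ, i ≤ n ∧ Sim l (pd n i) :=
  stmt8_general n l hl

end PeBlocks
end

section
/- Let n ≥ 1 and let λ ∈ ℂ^n be generic in the sense that λ_i − λ_j ∉ ℤ for all 1 ≤ i ≠ j ≤ n. Then for μ ∈ ℂ^n one has λ ∼ μ if and only if μ − λ ∈ 2ℤ^n, i.e. every coordinate of μ − λ is an even integer. In other words, the equivalence class of a generic λ is exactly λ + 2ℤ^n. -/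
/-
Shared setup: weights for pe(n) are vectors in ℂⁿ (`Fin n → ℂ`), with 0-based indices
(the 1-based index i corresponds to the 0-based index i−1; since the dot action and the
shift λ̌ only involve differences of indices, the translation is verbatim).
`ε_k` is `Pi.single k 1`. The dot action is (w·λ)_i = λ_{w⁻¹ i} + i − w⁻¹ i; the integral
Weyl group condition is that w·λ − λ has integer coordinates; `Sim` is the equivalence
closure (`Relation.EqvGen`) of the moves λ ↦ λ ± 2ε_k and λ ↦ w·λ for w ∈ W^λ.
-/

namespace PeBlocks

/-!
Every move of `∼` changes a weight by an integer vector, so genericity is an invariant of the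
class of `λ`. For a generic weight `μ`, an element `w` of `W^μ` must fix every index, since
otherwise `μ_{w⁻¹ i} - μ_i` would be an integer; hence the Weyl moves are trivial on the class
and only the moves `± 2ε_k` remain, which generate exactly `λ + 2ℤⁿ`.
-/

section

variable {n : ℕ}

def IsGeneric (l : Fin n → ℂ) : Prop :=
  ∀ i j : Fin n, i ≠ j → ∀ z : ℤ, l i - l j ≠ (z : ℂ)

def LatticeCongr (d : ℤ) (μ ν : Fin n → ℂ) : Prop :=
  ∀ i, ∃ z : ℤ, ν i - μ i = ((d * z : ℤ) : ℂ)

theorem equivalence_latticeCongr (d : ℤ) : Equivalence (LatticeCongr (n := n) d) where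
  refl _ _ := ⟨0, by simp⟩
  symm h i := by
    obtain ⟨z, hz⟩ := h i
    exact ⟨-z, by push_cast at hz ⊢; linear_combination -hz⟩
  trans h h' i := by
    obtain ⟨z, hz⟩ := h i
    obtain ⟨z', hz'⟩ := h' i
    exact ⟨z + z', by push_cast at hz hz' ⊢; linear_combination hz + hz'⟩

theorem latticeCongr_one_iff {μ ν : Fin n → ℂ} :
    LatticeCongr 1 μ ν ↔ ∀ i, ∃ z : ℤ, ν i - μ i = (z : ℂ) := by
  simp only [LatticeCongr, one_mul]

theorem IsGeneric.of_latticeCongr {d : ℤ} {μ ν : Fin n → ℂ} (hμ : IsGeneric μ)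
    (h : LatticeCongr d μ ν) : IsGeneric ν := by
  intro i j hij z hz
  obtain ⟨a, ha⟩ := h i
  obtain ⟨b, hb⟩ := h j
  exact hμ i j hij (z - d * a + d * b) (by push_cast at ha hb ⊢; linear_combination hz - ha + hb)

theorem dot_eq_self_of_isGeneric {μ : Fin n → ℂ} (hμ : IsGeneric μ) {w : Equiv.Perm (Fin n)}
    (hw : InIntegralWeyl w μ) : dot w μ = μ := by
  have hfix : ∀ i, w⁻¹ i = i := by
    intro i
    by_contra hne
    obtain ⟨z, hz⟩ := hw i
    refine hμ (w⁻¹ i) i hne (z - (i : ℤ) + ((w⁻¹ i : Fin n) : ℤ)) ?_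
    simp only [dot] at hz
    push_cast
    linear_combination hz
  funext i
  simp [dot, hfix i]

theorem latticeCongr_one_of_step {μ ν : Fin n → ℂ} (h : Step μ ν) : LatticeCongr 1 μ ν := by
  rw [latticeCongr_one_iff]
  rcases h with ⟨k, rfl | rfl⟩ | ⟨w, hw, rfl⟩
  · intro i
    exact ⟨if i = k then 2 else 0, by by_cases hik : i = k <;> simp [hik]⟩
  · intro i
    exact ⟨if i = k then -2 else 0, by by_cases hik : i = k <;> simp [hik]⟩
  · exact hw

theorem latticeCongr_two_of_step {μ ν : Fin n → ℂ} (hμ : IsGeneric μ) (h : Step μ ν) :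
    LatticeCongr 2 μ ν := by
  rcases h with ⟨k, rfl | rfl⟩ | ⟨w, hw, rfl⟩
  · intro i
    exact ⟨if i = k then 1 else 0, by by_cases hik : i = k <;> simp [hik]⟩
  · intro i
    exact ⟨if i = k then -1 else 0, by by_cases hik : i = k <;> simp [hik]⟩
  · rw [dot_eq_self_of_isGeneric hμ hw]
    exact (equivalence_latticeCongr 2).refl μ

theorem latticeCongr_one_of_sim {μ ν : Fin n → ℂ} (h : Sim μ ν) : LatticeCongr 1 μ ν :=
  (equivalence_latticeCongr 1).eqvGen_iff.mp
    (Relation.EqvGen.mono (r := Step) (fun _ _ => latticeCongr_one_of_step) μ ν h)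

theorem latticeCongr_two_of_sim {μ ν : Fin n → ℂ} (hμ : IsGeneric μ) (h : Sim μ ν) :
    LatticeCongr 2 μ ν := by
  induction h with
  | rel _ _ hs => exact latticeCongr_two_of_step hμ hs
  | refl => exact (equivalence_latticeCongr 2).refl _
  | symm x y hxy ih =>
    have hx : IsGeneric x :=
      hμ.of_latticeCongr ((equivalence_latticeCongr 1).symm (latticeCongr_one_of_sim hxy))
    exact (equivalence_latticeCongr 2).symm (ih hx)
  | trans x y z hxy _ ih₁ ih₂ =>
    exact (equivalence_latticeCongr 2).trans (ih₁ hμ)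
      (ih₂ (hμ.of_latticeCongr (latticeCongr_one_of_sim hxy)))

theorem sim_add_single_two_mul (μ : Fin n → ℂ) (k : Fin n) (z : ℤ) :
    Sim μ (μ + Pi.single k ((2 * z : ℤ) : ℂ)) := by
  have hsucc (z : ℤ) : μ + Pi.single k ((2 * (z + 1) : ℤ) : ℂ) =
      μ + Pi.single k ((2 * z : ℤ) : ℂ) + (2 : ℂ) • Pi.single k 1 := by
    funext i
    by_cases hi : i = k
    · subst hi
      simp only [Pi.add_apply, Pi.smul_apply, Pi.single_eq_same, smul_eq_mul]
      push_cast
      ring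
    · simp [hi]
  induction z using Int.induction_on with
  | zero =>
    rw [mul_zero, Int.cast_zero, Pi.single_zero, add_zero]
    exact Relation.EqvGen.refl μ
  | succ m ih =>
    rw [hsucc]
    exact Relation.EqvGen.trans _ _ _ ih (Relation.EqvGen.rel _ _ (Or.inl ⟨k, Or.inl rfl⟩))
  | pred m ih =>
    rw [show -(m : ℤ) = -m - 1 + 1 by ring, hsucc] at ih
    refine Relation.EqvGen.trans _ _ _ ih (Relation.EqvGen.rel _ _ (Or.inl ⟨k, Or.inr ?_⟩))
    rw [add_sub_cancel_right]

theorem sim_add_sum {ι : Type*} (f : ι → Fin n → ℂ) (hf : ∀ ν k, Sim ν (ν + f k))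
    (μ : Fin n → ℂ) (s : Finset ι) : Sim μ (μ + ∑ k ∈ s, f k) := by
  classical
  induction s using Finset.induction_on with
  | empty =>
    rw [Finset.sum_empty, add_zero]
    exact Relation.EqvGen.refl μ
  | insert k s hk ih =>
    rw [Finset.sum_insert hk, add_comm (f k), ← add_assoc]
    exact Relation.EqvGen.trans _ _ _ ih (hf _ k)

theorem sim_of_latticeCongr_two {μ ν : Fin n → ℂ} (h : LatticeCongr 2 μ ν) : Sim μ ν := by
  choose z hz using h
  have hsum : ∑ k, Pi.single k ((2 * z k : ℤ) : ℂ) = ν - μ := by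
    simp_rw [← hz]
    exact Finset.univ_sum_single (ν - μ)
  have hsim := sim_add_sum _ (fun ν k => sim_add_single_two_mul ν k (z k)) μ Finset.univ
  rwa [hsum, add_sub_cancel] at hsim

end

theorem stmt9_general (n : ℕ) (l : Fin n → ℂ)
    (hgen : ∀ i j : Fin n, i ≠ j → ∀ z : ℤ, l i - l j ≠ (z : ℂ)) (m : Fin n → ℂ) :
    Sim l m ↔ ∀ i : Fin n, ∃ z : ℤ, m i - l i = ((2 * z : ℤ) : ℂ) :=
  ⟨latticeCongr_two_of_sim hgen, sim_of_latticeCongr_two⟩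

theorem stmt9 (n : ℕ) (hn : 1 ≤ n) (l : Fin n → ℂ)
    (hgen : ∀ i j : Fin n, i ≠ j → ∀ z : ℤ, l i - l j ≠ (z : ℂ)) (m : Fin n → ℂ) :
    Sim l m ↔ ∀ i : Fin n, ∃ z : ℤ, m i - l i = ((2 * z : ℤ) : ℂ) :=
  stmt9_general n l hgen m

end PeBlocks
end
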